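/- Let (G, k, β) be a Büchi coverage game in which all vertices are owned by Player 1, i.e., V₂ = ∅. Then Coverer has a covering strategy in (G, k, β) if and only if there exist k nonempty sets C₁, …, C_k ⊆ V (not necessarily distinct), each reachable from v₀ by a finite E-path and each nontrivially strongly connected (for every ordered pair of vertices u, w ∈ Cᵢ, including u = w, there is a nonempty finite E-path from u to w that stays inside Cᵢ), such that every objective α ∈ β intersects at least one of C₁, …, C_k. -/

import Mathlib

open scoped Classical

universe u

/-- A strategy: maps the strict history (the play so far, excluding the current
vertex) and the current vertex to a next vertex. -/
abbrev Strat (V : Type u) := List V → V → V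

/-- A two-player game graph `G = (V₁, V₂, v₀, E)`. -/
structure GameGraph (V : Type u) where
  V1 : Set V
  V2 : Set V
  init : V
  E : V → V → Prop

namespace GameGraph

variable {V : Type u}

/-- `V₁` and `V₂` are disjoint, together cover all vertices, and `E` is total. -/
def WellFormed (G : GameGraph V) : Prop :=
  Disjoint G.V1 G.V2 ∧ G.V1 ∪ G.V2 = Set.univ ∧ ∀ v, ∃ u, G.E v u

/-- `f` is a Player-1 strategy: at every history ending in a Player-1 vertex,
it chooses an `E`-successor. -/
def IsStrategy1 (G : GameGraph V) (f : Strat V) : Prop :=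
  ∀ (h : List V) (v : V), v ∈ G.V1 → G.E v (f h v)

/-- `f` is a Player-2 strategy. -/
def IsStrategy2 (G : GameGraph V) (f : Strat V) : Prop :=
  ∀ (h : List V) (v : V), v ∈ G.V2 → G.E v (f h v)

/-- The pair (strict history, current vertex) after `n` steps from `v`, when the
players move according to `f1` and `f2`. -/
noncomputable def run (G : GameGraph V) (f1 f2 : Strat V) (v : V) : ℕ → List V × V
  | 0 => ([], v)
  | n + 1 =>
      let p := run G f1 f2 v n
      (p.1 ++ [p.2], if p.2 ∈ G.V1 then f1 p.1 p.2 else f2 p.1 p.2)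

/-- The play from `v` generated by `f1` and `f2`. -/
noncomputable def outcomeFrom (G : GameGraph V) (f1 f2 : Strat V) (v : V) (n : ℕ) : V :=
  (G.run f1 f2 v n).2

/-- The play from the initial vertex generated by `f1` and `f2`. -/
noncomputable def outcome (G : GameGraph V) (f1 f2 : Strat V) : ℕ → V :=
  G.outcomeFrom f1 f2 G.init

/-- `Gᵛ`: the same game graph with initial vertex `v`. -/
def withInit (G : GameGraph V) (v : V) : GameGraph V := { G with init := v }

end GameGraph

variable {V : Type u}

/-- The set of vertices visited infinitely often along a play. -/
def infSet (ρ : ℕ → V) : Set V := { u | ∀ n, ∃ m, n ≤ m ∧ ρ m = u }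

/-- The two objective types: Büchi and co-Büchi. -/
inductive ObjKind : Type
  | buchi
  | cobuchi

/-- Satisfaction of a `γ` objective `α` by a play `ρ`. -/
def SatObj (γ : ObjKind) (ρ : ℕ → V) (α : Set V) : Prop :=
  match γ with
  | .buchi => (infSet ρ ∩ α).Nonempty
  | .cobuchi => infSet ρ ∩ α = ∅

/-- `F` is a covering strategy in the `γ`-coverage game `(G, k, β)`: against every
Player-2 strategy, every objective of `β` is satisfied by the play of some agent. -/
def IsCovering (G : GameGraph V) (γ : ObjKind) (k : ℕ) (β : Finset (Set V))
    (F : Fin k → Strat V) : Prop :=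
  ∀ f2, G.IsStrategy2 f2 → ∀ α ∈ β, ∃ i, SatObj γ (G.outcome (F i) f2) α

/-- Coverer has a covering strategy in the `γ`-coverage game `(G, k, β)`. -/
def CovererWins (G : GameGraph V) (γ : ObjKind) (k : ℕ) (β : Finset (Set V)) : Prop :=
  ∃ F : Fin k → Strat V, (∀ i, G.IsStrategy1 (F i)) ∧ IsCovering G γ k β F

/-- `f2` is a disrupting strategy in the `γ`-coverage game `(G, k, β)`: against every
Coverer strategy, some objective of `β` is satisfied by none of the agents' plays. -/
def IsDisrupting (G : GameGraph V) (γ : ObjKind) (k : ℕ) (β : Finset (Set V))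
    (f2 : Strat V) : Prop :=
  ∀ F : Fin k → Strat V, (∀ i, G.IsStrategy1 (F i)) →
    ∃ α ∈ β, ∀ i, ¬ SatObj γ (G.outcome (F i) f2) α

/-- Disruptor has a disrupting strategy in the `γ`-coverage game `(G, k, β)`. -/
def DisruptorWins (G : GameGraph V) (γ : ObjKind) (k : ℕ) (β : Finset (Set V)) : Prop :=
  ∃ f2, G.IsStrategy2 f2 ∧ IsDisrupting G γ k β f2


section AuxStmt18

open Relation

variable {V : Type u}

private lemma transGen_exists_chain' {r : V → V → Prop} {a b : V}
    (h : Relation.TransGen r a b) :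
    ∃ l : List V, l ≠ [] ∧ List.Chain r a l ∧ l.getLast? = some b := by
  induction h using Relation.TransGen.head_induction_on with
  | single h => exact ⟨[b], by simp, List.isChain_pair.2 h, by simp⟩
  | head h' h IH =>
    obtain ⟨l, hne, hch, hl⟩ := IH
    refine ⟨_ :: l, by simp, List.chain_cons.2 ⟨h', hch⟩, ?_⟩
    cases l with
    | nil => exact absurd rfl hne
    | cons d l' => rw [List.getLast?_cons_cons]; exact hl

/-- Walking along a scheduled sequence of path segments. -/
private noncomputable def walkAux (v0 : V) (seg : ℕ → List V) : ℕ → V × List V × ℕ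
  | 0 => (v0, seg 0, 0)
  | n + 1 =>
      match walkAux v0 seg n with
      | (v, [], j) => (v, [], j)
      | (_, x :: rest, j) => if rest = [] then (x, seg (j + 1), j + 1) else (x, rest, j)

private lemma exists_play [Fintype V] (E : V → V → Prop) (v0 : V) (C : Set V)
    (hne : C.Nonempty) (hreach : ∃ u ∈ C, Relation.ReflTransGen E v0 u)
    (hsc : ∀ u ∈ C, ∀ w ∈ C, Relation.TransGen E u w) :
    ∃ ρ : ℕ → V, ρ 0 = v0 ∧ (∀ n, E (ρ n) (ρ (n + 1))) ∧ C ⊆ infSet ρ := by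
  classical
  obtain ⟨c0, hc0⟩ := hne
  have hCfin : C.Finite := Set.toFinite C
  set l : List V := hCfin.toFinset.toList with hl
  have hmem : ∀ v, v ∈ l ↔ v ∈ C := by
    intro v
    rw [hl, Finset.mem_toList, Set.Finite.mem_toFinset]
  have hlne : l ≠ [] := by
    intro h
    have := (hmem c0).2 hc0
    simp [h] at this
  have hlpos : 0 < l.length := List.length_pos_iff.2 hlne
  set target : ℕ → V := fun j => l.get ⟨j % l.length, Nat.mod_lt _ hlpos⟩ with htarget
  have htargetC : ∀ j, target j ∈ C := fun j => (hmem _).1 (l.get_mem _)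
  set prev : ℕ → V := fun j => if j = 0 then v0 else target (j - 1) with hprev
  have hsegEx : ∀ j, ∃ p : List V,
      p ≠ [] ∧ List.Chain E (prev j) p ∧ p.getLast? = some (target j) := by
    intro j
    apply transGen_exists_chain'
    rcases Nat.eq_zero_or_pos j with hj | hj
    · obtain ⟨u, huC, hu⟩ := hreach
      have hp : prev j = v0 := by simp [hprev, hj]
      rw [hp]
      exact Relation.TransGen.trans_right hu (hsc u huC _ (htargetC _))
    · have hp : prev j = target (j - 1) := by
        simp [hprev, Nat.pos_iff_ne_zero.1 hj]
      rw [hp]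
      exact hsc _ (htargetC _) _ (htargetC _)
  choose seg hsegne hsegch hseglast using hsegEx
  set W := walkAux v0 seg with hW
  have hstep : ∀ n v x rest j, W n = (v, x :: rest, j) →
      W (n + 1) = if rest = [] then (x, seg (j + 1), j + 1) else (x, rest, j) := by
    intro n v x rest j h
    show walkAux v0 seg (n + 1) = _
    rw [walkAux, ← hW, h]
  have hInv : ∀ n, ∃ v x rest j, W n = (v, x :: rest, j) ∧
      List.Chain E v (x :: rest) ∧ (x :: rest).getLast? = some (target j) := by
    intro n
    induction n with
    | zero =>
      cases hs : seg 0 with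
      | nil => exact absurd hs (hsegne 0)
      | cons x rest =>
        refine ⟨v0, x, rest, 0, ?_, ?_, ?_⟩
        · rw [hW]; show (v0, seg 0, 0) = _; rw [hs]
        · have h2 := hsegch 0
          rw [hs] at h2
          have hp : prev 0 = v0 := by simp [hprev]
          rwa [hp] at h2
        · have h2 := hseglast 0; rwa [hs] at h2
    | succ n ih =>
      obtain ⟨v, x, rest, j, hWn, hch, hlast⟩ := ih
      have hx := List.chain_cons.1 hch
      by_cases hr : rest = []
      · subst hr
        have hx' : x = target j := by simpa using hlast
        have hs := hstep n v x [] j hWn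
        rw [if_pos rfl] at hs
        cases hs1 : seg (j + 1) with
        | nil => exact absurd hs1 (hsegne (j + 1))
        | cons y rest' =>
          refine ⟨x, y, rest', j + 1, by rw [hs, hs1], ?_, ?_⟩
          · have h2 := hsegch (j + 1)
            rw [hs1] at h2
            have hp : prev (j + 1) = target j := by simp [hprev]
            rwa [hp, ← hx'] at h2
          · have h2 := hseglast (j + 1); rwa [hs1] at h2
      · have hs := hstep n v x rest j hWn
        rw [if_neg hr] at hs
        cases rest with
        | nil => exact absurd rfl hr
        | cons y rest' =>
          rw [List.getLast?_cons_cons] at hlast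
          exact ⟨x, y, rest', j, hs, hx.2, hlast⟩
  set ρ : ℕ → V := fun n => (W n).1 with hρ
  have hρ0 : ρ 0 = v0 := by rw [hρ, hW]; rfl
  have hρE : ∀ n, E (ρ n) (ρ (n + 1)) := by
    intro n
    obtain ⟨v, x, rest, j, hWn, hch, _⟩ := hInv n
    have h1 : ρ n = v := by rw [hρ]; simp [hWn]
    have h2 : ρ (n + 1) = x := by
      have hs := hstep n v x rest j hWn
      rw [hρ]
      by_cases hr : rest = [] <;> simp [hs, hr]
    rw [h1, h2]
    exact (List.chain_cons.1 hch).1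
  have hJle : ∀ n, (W n).2.2 ≤ n := by
    intro n
    induction n with
    | zero => rw [hW]; exact Nat.le_refl 0
    | succ n ih =>
      obtain ⟨v, x, rest, j, hWn, _, _⟩ := hInv n
      have hs := hstep n v x rest j hWn
      have hj : (W n).2.2 = j := by rw [hWn]
      rw [hj] at ih
      by_cases hr : rest = [] <;> rw [hs] <;> simp [hr] <;> omega
  -- key increment lemma
  have hkey : ∀ L n j, (W n).2.1.length ≤ L → (W n).2.2 = j →
      ∃ m, n < m ∧ (W m).2.2 = j + 1 ∧ ρ m = target j := by
    intro L
    induction L with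
    | zero =>
      intro n j hlen _
      obtain ⟨v, x, rest, j', hWn, _, _⟩ := hInv n
      rw [hWn] at hlen
      simp at hlen
    | succ L IH =>
      intro n j hlen hj
      obtain ⟨v, x, rest, j', hWn, hch, hlast⟩ := hInv n
      have hj' : j' = j := by rw [hWn] at hj; exact hj
      subst hj'
      by_cases hr : rest = []
      · subst hr
        have hx' : x = target j' := by simpa using hlast
        have hs := hstep n v x [] j' hWn
        rw [if_pos rfl] at hs
        refine ⟨n + 1, Nat.lt_succ_self n, by rw [hs], ?_⟩
        show (W (n + 1)).1 = target j'
        rw [hs]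
        exact hx'
      · have hs := hstep n v x rest j' hWn
        rw [if_neg hr] at hs
        have hlen' : (W (n + 1)).2.1.length ≤ L := by
          rw [hs]
          rw [hWn] at hlen
          simp at hlen ⊢
          omega
        obtain ⟨m, hm, h1, h2⟩ := IH (n + 1) j' hlen' (by rw [hs])
        exact ⟨m, by omega, h1, h2⟩
  have hJreach : ∀ j, ∃ n, (W n).2.2 = j := by
    intro j
    induction j with
    | zero => exact ⟨0, by rw [hW]; rfl⟩
    | succ j ih =>
      obtain ⟨n, hn⟩ := ih
      obtain ⟨m, _, h1, _⟩ := hkey (W n).2.1.length n j le_rfl hn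
      exact ⟨m, h1⟩
  refine ⟨ρ, hρ0, hρE, ?_⟩
  intro c hc N
  -- find a large j with target j = c
  obtain ⟨idx, hidx⟩ := List.mem_iff_get.1 ((hmem c).2 hc)
  set j : ℕ := idx.val + l.length * N with hj
  have hjN : N ≤ j := by
    have : N ≤ l.length * N := Nat.le_mul_of_pos_left N hlpos
    omega
  have hmod : j % l.length = idx.val := by
    rw [hj, Nat.add_mul_mod_self_left, Nat.mod_eq_of_lt idx.isLt]
  have htc : target j = c := by
    show l.get ⟨j % l.length, Nat.mod_lt _ hlpos⟩ = c
    rw [show (⟨j % l.length, Nat.mod_lt _ hlpos⟩ : Fin l.length) = idx from Fin.ext hmod,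
      hidx]
  obtain ⟨n, hn⟩ := hJreach j
  obtain ⟨m, _, h1, h2⟩ := hkey (W n).2.1.length n j le_rfl hn
  have hjm : j + 1 ≤ m := by rw [← h1]; exact hJle m
  exact ⟨m, by omega, by rw [h2, htc]⟩

private lemma strat_of_play (G : GameGraph V) (hV1 : G.V1 = Set.univ)
    (hE : ∀ v, ∃ u, G.E v u) (ρ : ℕ → V) (h0 : ρ 0 = G.init)
    (hρ : ∀ n, G.E (ρ n) (ρ (n + 1))) :
    ∃ f1 : Strat V, G.IsStrategy1 f1 ∧ ∀ f2, G.outcome f1 f2 = ρ := by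
  classical
  refine ⟨fun h v => if v = ρ h.length then ρ (h.length + 1)
    else Classical.choose (hE v), ?_, ?_⟩
  · intro h v _
    by_cases hv : v = ρ h.length
    · simp only [if_pos hv, hv]; exact hρ _
    · simp only [if_neg hv]; exact Classical.choose_spec (hE v)
  · intro f2
    funext n
    set f1 : Strat V := fun h v => if v = ρ h.length then ρ (h.length + 1)
      else Classical.choose (hE v) with hf1
    have key : ∀ n, (G.run f1 f2 G.init n).1.length = n ∧
        (G.run f1 f2 G.init n).2 = ρ n := by
      intro n
      induction n with
      | zero => exact ⟨rfl, h0.symm⟩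
      | succ n ih =>
        have hv1 : (G.run f1 f2 G.init n).2 ∈ G.V1 := by rw [hV1]; trivial
        constructor
        · simp [GameGraph.run, ih.1]
        · show (if (G.run f1 f2 G.init n).2 ∈ G.V1 then
              f1 (G.run f1 f2 G.init n).1 (G.run f1 f2 G.init n).2
            else f2 (G.run f1 f2 G.init n).1 (G.run f1 f2 G.init n).2) = ρ (n + 1)
          rw [if_pos hv1, ih.2]
          show (if ρ n = ρ (G.run f1 f2 G.init n).1.length then
            ρ ((G.run f1 f2 G.init n).1.length + 1) else _) = _
          rw [ih.1]
          simp
    exact (key n).2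

private lemma play_of_strat (G : GameGraph V) (hV1 : G.V1 = Set.univ)
    (f1 f2 : Strat V) (h1 : G.IsStrategy1 f1) :
    G.outcome f1 f2 0 = G.init ∧
      ∀ n, G.E (G.outcome f1 f2 n) (G.outcome f1 f2 (n + 1)) := by
  refine ⟨rfl, fun n => ?_⟩
  have hv1 : (G.run f1 f2 G.init n).2 ∈ G.V1 := by rw [hV1]; trivial
  show G.E (G.run f1 f2 G.init n).2 (G.run f1 f2 G.init (n + 1)).2
  have : (G.run f1 f2 G.init (n + 1)).2 =
      (if (G.run f1 f2 G.init n).2 ∈ G.V1 then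
        f1 (G.run f1 f2 G.init n).1 (G.run f1 f2 G.init n).2
      else f2 (G.run f1 f2 G.init n).1 (G.run f1 f2 G.init n).2) := rfl
  rw [this, if_pos hv1]
  exact h1 _ _ hv1

private lemma infSet_nonempty' [Fintype V] (ρ : ℕ → V) : (infSet ρ).Nonempty := by
  obtain ⟨y, hy⟩ := Finite.exists_infinite_fiber ρ
  have hy' : (ρ ⁻¹' {y}).Infinite := Set.infinite_coe_iff.1 hy
  refine ⟨y, fun n => ?_⟩
  obtain ⟨m, hm, hlt⟩ := hy'.exists_gt n
  exact ⟨m, le_of_lt hlt, hm⟩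

private lemma eventually_infSet [Fintype V] (ρ : ℕ → V) :
    ∃ N, ∀ n, N ≤ n → ρ n ∈ infSet ρ := by
  classical
  have key : ∀ v : V, ∃ N, v ∉ infSet ρ → ∀ m, N ≤ m → ρ m ≠ v := by
    intro v
    by_cases hv : v ∈ infSet ρ
    · exact ⟨0, fun h => absurd hv h⟩
    · simp only [infSet, Set.mem_setOf_eq, not_forall] at hv
      obtain ⟨n, hn⟩ := hv
      push_neg at hn
      exact ⟨n, fun _ m hm => hn m hm⟩
  choose N hN using key
  refine ⟨Finset.univ.sup N, fun n hn => ?_⟩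
  by_contra h
  exact hN (ρ n) h n (le_trans (Finset.le_sup (Finset.mem_univ _)) hn) rfl

private lemma transgen_of_times (E : V → V → Prop) (ρ : ℕ → V) (S : Set V) (N : ℕ)
    (hS : ∀ t, N ≤ t → ρ t ∈ S) (hE : ∀ n, E (ρ n) (ρ (n + 1))) :
    ∀ m m', N ≤ m → m < m' →
      Relation.TransGen (fun a b => E a b ∧ a ∈ S ∧ b ∈ S) (ρ m) (ρ m') := by
  intro m m' hm hlt
  induction m', hlt using Nat.le_induction with
  | base => exact Relation.TransGen.single ⟨hE m, hS m hm, hS (m + 1) (by omega)⟩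
  | succ m' hm' ih =>
    exact Relation.TransGen.tail ih ⟨hE m', hS m' (by omega), hS (m' + 1) (by omega)⟩

end AuxStmt18

/-- in a Büchi coverage game (G, k, β) with V₂ = ∅, Coverer has a
covering strategy iff there are k nonempty sets C₁, …, C_k ⊆ V, each reachable from
the initial vertex and nontrivially strongly connected (with connecting paths staying
inside the set), such that every objective of β intersects one of them. -/
theorem stmt18 {V : Type u} [Fintype V] (G : GameGraph V) (hG : G.WellFormed)
    (hV2 : G.V2 = ∅) (k : ℕ) (hk : 1 ≤ k) (β : Finset (Set V)) :
    CovererWins G ObjKind.buchi k β ↔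
      ∃ C : Fin k → Set V,
        (∀ i, (C i).Nonempty ∧
          (∃ u ∈ C i, Relation.ReflTransGen G.E G.init u) ∧
          (∀ u ∈ C i, ∀ w ∈ C i,
            Relation.TransGen (fun a b => G.E a b ∧ a ∈ C i ∧ b ∈ C i) u w)) ∧
        ∀ α ∈ β, ∃ i, (α ∩ C i).Nonempty := by
  have hV1 : G.V1 = Set.univ := by
    have h := hG.2.1
    rwa [hV2, Set.union_empty] at h
  have hEt : ∀ v, ∃ u, G.E v u := hG.2.2
  constructor
  · rintro ⟨F, hF1, hFcov⟩
    set f2 : Strat V := fun _ v => v with hf2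
    have hf2s : G.IsStrategy2 f2 := by
      intro h v hv
      rw [hV2] at hv
      exact absurd hv (Set.notMem_empty v)
    set ρ : Fin k → ℕ → V := fun i => G.outcome (F i) f2 with hρ
    refine ⟨fun i => infSet (ρ i), fun i => ?_, ?_⟩
    · have hplay := play_of_strat G hV1 (F i) f2 (hF1 i)
      obtain ⟨N, hN⟩ := eventually_infSet (ρ i)
      refine ⟨infSet_nonempty' _, ⟨ρ i N, hN N le_rfl, ?_⟩, ?_⟩
      · have hall : ∀ n, Relation.ReflTransGen G.E G.init (ρ i n) := by
          intro n
          induction n with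
          | zero =>
            rw [show ρ i 0 = G.init from hplay.1]
          | succ n ih => exact ih.tail (hplay.2 n)
        exact hall N
      · intro u hu w hw
        obtain ⟨m, hm, hmu⟩ := hu N
        obtain ⟨m', hm', hmw⟩ := hw (m + 1)
        have h := transgen_of_times G.E (ρ i) (infSet (ρ i)) N hN hplay.2 m m' hm
          (by omega)
        rwa [hmu, hmw] at h
    · intro α hα
      obtain ⟨i, hi⟩ := hFcov f2 hf2s α hα
      obtain ⟨a, ha1, ha2⟩ := hi
      exact ⟨i, a, ha2, ha1⟩
  · rintro ⟨C, hC, hcov⟩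
    have hplays : ∀ i : Fin k, ∃ ρ : ℕ → V, ρ 0 = G.init ∧
        (∀ n, G.E (ρ n) (ρ (n + 1))) ∧ C i ⊆ infSet ρ := by
      intro i
      obtain ⟨hne, hreach, hsc⟩ := hC i
      exact exists_play G.E G.init (C i) hne hreach
        (fun u hu w hw => Relation.TransGen.mono (fun a b (h : G.E a b ∧ a ∈ C i ∧ b ∈ C i) => h.1) u w (hsc u hu w hw))
    choose ρ h0 hE' hsub using hplays
    have hstrats : ∀ i, ∃ f1, G.IsStrategy1 f1 ∧ ∀ f2, G.outcome f1 f2 = ρ i :=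
      fun i => strat_of_play G hV1 hEt (ρ i) (h0 i) (hE' i)
    choose F hF hFo using hstrats
    refine ⟨F, hF, ?_⟩
    intro f2 _ α hα
    obtain ⟨i, a, ha⟩ := hcov α hα
    refine ⟨i, ?_⟩
    show (infSet (G.outcome (F i) f2) ∩ α).Nonempty
    rw [hFo i f2]
    exact ⟨a, hsub i ha.2, ha.1⟩
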